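/- Let G = ℤ/pℤ ⊕ ℤ/pℤ with generators τ₁, τ₂ and tᵢ = τᵢ−1. In ℤ[G], the kernel of the multiplication map η ↦ η·t₁t₂ equals ℤ[G]·T₁ + ℤ[G]·T₂, and the image ℤ[G]·t₁t₂ is a free ℤ-module of rank (p−1)². -/

import Mathlib

open MonoidAlgebra

abbrev GrpP (p : ℕ) := Multiplicative (ZMod p × ZMod p)
abbrev GA (p : ℕ) := MonoidAlgebra ℤ (GrpP p)

/-- The group element `τ₁^a τ₂^b` viewed in the group ring `ℤ[G]`. -/
noncomputable def τ (p : ℕ) (v : ZMod p × ZMod p) : GA p :=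
  MonoidAlgebra.of ℤ (GrpP p) (Multiplicative.ofAdd v)

/-- The "trace" element `1 + σ + ⋯ + σ^{p-1}` for `σ = τ₁^a τ₂^b`. -/
noncomputable def tr (p : ℕ) (v : ZMod p × ZMod p) : GA p :=
  ∑ k ∈ Finset.range p, τ p v ^ k

/-- The sum of all group elements `T_G = ∑_{g ∈ G} g`. -/
noncomputable def TG (p : ℕ) [NeZero p] : GA p :=
  ∑ g : GrpP p, MonoidAlgebra.of ℤ (GrpP p) g

/-!
Write `η = ∑ c (a, b) τ₁^a τ₂^b`. The coefficient of `η t₁ t₂` at `(a + 1, b + 1)` is the mixed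
second difference of `c`, so `η t₁ t₂ = 0` exactly when `c (a, b) = f a + g b`. Such an `η` lies
in `ℤ[G] T₁ + ℤ[G] T₂`: multiplying by `T₁` spreads a coefficient function supported on `a = 0`
over all `a`. So the kernel is also the kernel of the surjection
`η ↦ (c (a, b) - c (a, 0) - c (0, b) + c (0, 0))_{a, b ≠ 0}` onto `ℤ^{(p-1)²}`, and
`ℤ[G] t₁ t₂ ≅ ℤ[G] / ker` is free of that rank.
-/

open MonoidAlgebra Multiplicative Finset

section RectDefect

variable {A B M : Type*} [Zero A] [Zero B] [AddCommGroup M]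

/-- Vanishes identically exactly when `c (a, b) = f a + g b` for some `f`, `g`. -/
def rectDefect (c : A × B → M) (a : A) (b : B) : M :=
  c (a, b) - c (a, 0) - c (0, b) + c (0, 0)

lemma rectDefect_zero_left (c : A × B → M) (b : B) : rectDefect c 0 b = 0 := by
  simp [rectDefect]

lemma rectDefect_zero_right (c : A × B → M) (a : A) : rectDefect c a 0 = 0 := by
  simp [rectDefect]

variable (R : Type*) [Ring R] [Module R M]

def offAxisRectDefect : (A × B → M) →ₗ[R] ({a : A // a ≠ 0} × {b : B // b ≠ 0} → M) where
  toFun c ab := rectDefect c ab.1 ab.2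
  map_add' c d := by ext; simp only [rectDefect, Pi.add_apply]; abel
  map_smul' r c := by
    ext; simp only [rectDefect, Pi.smul_apply, RingHom.id_apply, smul_sub, smul_add]

variable {R}

lemma offAxisRectDefect_eq_zero_iff (c : A × B → M) :
    offAxisRectDefect R c = 0 ↔ ∀ a b, rectDefect c a b = 0 := by
  refine ⟨fun h a b => ?_, fun h => funext fun ab => h ab.1 ab.2⟩
  rcases eq_or_ne a 0 with rfl | ha
  · exact rectDefect_zero_left c b
  rcases eq_or_ne b 0 with rfl | hb
  · exact rectDefect_zero_right c a
  exact congrFun h (⟨a, ha⟩, ⟨b, hb⟩)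

lemma offAxisRectDefect_surjective :
    Function.Surjective (offAxisRectDefect R : (A × B → M) →ₗ[R] _) := by
  classical
  intro x
  refine ⟨fun ab => if h : ab.1 ≠ 0 ∧ ab.2 ≠ 0 then x (⟨ab.1, h.1⟩, ⟨ab.2, h.2⟩) else 0, ?_⟩
  ext ⟨⟨a, ha⟩, ⟨b, hb⟩⟩
  simp [offAxisRectDefect, rectDefect, ha, hb]

end RectDefect

lemma Function.Periodic.zmod_eq_apply_zero {n : ℕ} [NeZero n] {α : Type*} {f : ZMod n → α}
    (h : Function.Periodic f 1) (a : ZMod n) : f a = f 0 := by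
  simpa using h.nat_mul_eq a.val

lemma rectDefect_eq_zero_of_mixedDiff {m n : ℕ} [NeZero m] [NeZero n] {M : Type*}
    [AddCommGroup M] (c : ZMod m × ZMod n → M)
    (h : ∀ a b, c (a + 1, b + 1) - c (a, b + 1) - c (a + 1, b) + c (a, b) = 0) (a : ZMod m)
    (b : ZMod n) : rectDefect c a b = 0 := by
  have hcol : ∀ a, Function.Periodic (fun b => c (a + 1, b) - c (a, b)) 1 := fun a b => by
    beta_reduce
    rw [← sub_eq_zero, ← h a b]; abel
  have hrow : Function.Periodic (fun a => rectDefect c a b) 1 := fun a => by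
    have := (hcol a).zmod_eq_apply_zero b
    rw [← sub_eq_zero] at this ⊢
    rw [← this]; simp only [rectDefect]; abel
  rw [hrow.zmod_eq_apply_zero a, rectDefect_zero_left]

variable {p : ℕ}

noncomputable def coeffFun (p : ℕ) [NeZero p] : GA p ≃ₗ[ℤ] (ZMod p × ZMod p → ℤ) :=
  (coeffLinearEquiv ℤ).trans (Finsupp.linearEquivFunOnFinite ℤ ℤ (ZMod p × ZMod p))

lemma τ_add (u v : ZMod p × ZMod p) : τ p (u + v) = τ p u * τ p v := by
  simp [τ, ofAdd_add]

lemma τ_pow (v : ZMod p × ZMod p) (k : ℕ) : τ p v ^ k = τ p (k • v) := by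
  rw [τ, τ, ← map_pow, ← ofAdd_nsmul]

lemma τ_zero : τ p 0 = 1 := by
  rw [τ, ofAdd_zero, map_one]

lemma tr_mul_τ_sub_one (v : ZMod p × ZMod p) : tr p v * (τ p v - 1) = 0 := by
  have : p • v = 0 := by ext <;> simp
  rw [tr, geom_sum_mul, τ_pow, this, τ_zero, sub_self]

lemma mul_t₁t₂_eq_zero_of_mem_span_tr {η : GA p}
    (hη : η ∈ Ideal.span ({tr p (1, 0), tr p (0, 1)} : Set (GA p))) :
    η * ((τ p (1, 0) - 1) * (τ p (0, 1) - 1)) = 0 := by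
  obtain ⟨u, v, rfl⟩ := Ideal.mem_span_pair.1 hη
  linear_combination (u * (τ p (0, 1) - 1)) * tr_mul_τ_sub_one (p := p) (1, 0) +
    (v * (τ p (1, 0) - 1)) * tr_mul_τ_sub_one (p := p) (0, 1)

variable [NeZero p]

lemma tr_eq_sum (v : ZMod p × ZMod p) : tr p v = ∑ x : ZMod p, τ p (x • v) := by
  rw [tr]
  refine sum_nbij' Nat.cast ZMod.val ?_ ?_ ?_ ?_ ?_ <;> intros <;>
    simp_all [τ_pow, ZMod.val_lt, Nat.mod_eq_of_lt, Nat.cast_smul_eq_nsmul]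

lemma coeffFun_apply (η : GA p) (v : ZMod p × ZMod p) : coeffFun p η v = η.coeff (ofAdd v) := rfl

lemma coeffFun_mul_τ (η : GA p) (v w : ZMod p × ZMod p) :
    coeffFun p (η * τ p v) w = coeffFun p η (w - v) := by
  simp [coeffFun_apply, τ, coeff_mul_single_apply, ← ofAdd_neg, ← ofAdd_add, sub_eq_add_neg]

lemma coeffFun_mul_tr (η : GA p) (v w : ZMod p × ZMod p) :
    coeffFun p (η * tr p v) w = ∑ x : ZMod p, coeffFun p η (w - x • v) := by
  simp [tr_eq_sum, mul_sum, coeffFun_mul_τ]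

lemma coeffFun_mul_t₁t₂ (η : GA p) (a b : ZMod p) :
    coeffFun p (η * ((τ p (1, 0) - 1) * (τ p (0, 1) - 1))) (a + 1, b + 1) =
      coeffFun p η (a + 1, b + 1) - coeffFun p η (a, b + 1) - coeffFun p η (a + 1, b) +
        coeffFun p η (a, b) := by
  have : (τ p (1, 0) - 1) * (τ p (0, 1) - 1) = τ p (1, 1) - τ p (1, 0) - τ p (0, 1) + 1 := by
    rw [show ((1, 1) : ZMod p × ZMod p) = (1, 0) + (0, 1) by simp, τ_add]; ring
  simp only [this, mul_add, mul_sub, mul_one, map_add, map_sub, Pi.add_apply, Pi.sub_apply,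
    coeffFun_mul_τ, Prod.mk_sub_mk, add_sub_cancel_right, sub_zero]
  abel

lemma coeffFun_mul_tr_one_zero (g : ZMod p → ℤ) :
    coeffFun p ((coeffFun p).symm (fun w => if w.1 = 0 then g w.2 else 0) * tr p (1, 0)) =
      fun w => g w.2 := by
  ext w
  simp [coeffFun_mul_tr, sub_eq_zero, eq_comm]

lemma coeffFun_mul_tr_zero_one (g : ZMod p → ℤ) :
    coeffFun p ((coeffFun p).symm (fun w => if w.2 = 0 then g w.1 else 0) * tr p (0, 1)) =
      fun w => g w.1 := by
  ext w
  simp [coeffFun_mul_tr, sub_eq_zero, eq_comm]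

lemma mem_span_tr_of_rectDefect_eq_zero (η : GA p)
    (h : ∀ a b, rectDefect (coeffFun p η) a b = 0) :
    η ∈ Ideal.span ({tr p (1, 0), tr p (0, 1)} : Set (GA p)) := by
  set c := coeffFun p η
  refine Ideal.mem_span_pair.2
    ⟨(coeffFun p).symm fun w => if w.1 = 0 then c (0, w.2) else 0,
      (coeffFun p).symm fun w => if w.2 = 0 then c (w.1, 0) - c (0, 0) else 0,
      (coeffFun p).injective ?_⟩
  rw [map_add, coeffFun_mul_tr_one_zero fun b => c (0, b),
    coeffFun_mul_tr_zero_one fun a => c (a, 0) - c (0, 0)]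
  ext ⟨a, b⟩
  have := h a b
  rw [rectDefect] at this
  simp only [Pi.add_apply]
  linarith

lemma mul_t₁t₂_eq_zero_iff_rectDefect (η : GA p) :
    η * ((τ p (1, 0) - 1) * (τ p (0, 1) - 1)) = 0 ↔ ∀ a b, rectDefect (coeffFun p η) a b = 0 :=
  ⟨fun hη => rectDefect_eq_zero_of_mixedDiff _ fun a b => by
      rw [← coeffFun_mul_t₁t₂, hη, map_zero, Pi.zero_apply],
    fun h => mul_t₁t₂_eq_zero_of_mem_span_tr (mem_span_tr_of_rectDefect_eq_zero η h)⟩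

lemma mul_t₁t₂_eq_zero_iff_mem_span_tr (η : GA p) :
    η * ((τ p (1, 0) - 1) * (τ p (0, 1) - 1)) = 0 ↔
      η ∈ Ideal.span ({tr p (1, 0), tr p (0, 1)} : Set (GA p)) :=
  ⟨fun h => mem_span_tr_of_rectDefect_eq_zero η ((mul_t₁t₂_eq_zero_iff_rectDefect η).1 h),
    mul_t₁t₂_eq_zero_of_mem_span_tr⟩

lemma ker_mulRight_t₁t₂ :
    LinearMap.ker (LinearMap.mulRight ℤ ((τ p (1, 0) - 1) * (τ p (0, 1) - 1))) =
      LinearMap.ker (offAxisRectDefect ℤ ∘ₗ (coeffFun p).toLinearMap) := by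
  ext η
  rw [LinearMap.mem_ker, LinearMap.mem_ker, LinearMap.mulRight_apply,
    mul_t₁t₂_eq_zero_iff_rectDefect, LinearMap.comp_apply, LinearEquiv.coe_coe,
    offAxisRectDefect_eq_zero_iff]

lemma ZMod.card_subtype_ne_zero : Fintype.card {a : ZMod p // a ≠ 0} = p - 1 := by
  simp [Fintype.card_subtype_compl, ZMod.card]

theorem stmt11_general (p : ℕ) [NeZero p] :
    (∀ η : GA p, η * ((τ p (1, 0) - 1) * (τ p (0, 1) - 1)) = 0 ↔
      η ∈ Ideal.span ({tr p (1, 0), tr p (0, 1)} : Set (GA p))) ∧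
    Nonempty (Module.Basis (Fin ((p - 1) ^ 2)) ℤ
      (LinearMap.range (LinearMap.mulRight ℤ ((τ p (1, 0) - 1) * (τ p (0, 1) - 1))))) := by
  refine ⟨mul_t₁t₂_eq_zero_iff_mem_span_tr, ⟨?_⟩⟩
  set F := LinearMap.mulRight ℤ ((τ p (1, 0) - 1) * (τ p (0, 1) - 1))
  set ψ := offAxisRectDefect ℤ ∘ₗ (coeffFun p).toLinearMap
  have hψ : Function.Surjective ψ :=
    (offAxisRectDefect_surjective (R := ℤ)).comp (coeffFun p).surjective
  let e : LinearMap.range F ≃ₗ[ℤ] ({a : ZMod p // a ≠ 0} × {b : ZMod p // b ≠ 0} → ℤ) :=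
    F.quotKerEquivRange.symm ≪≫ₗ Submodule.quotEquivOfEq _ _ ker_mulRight_t₁t₂ ≪≫ₗ
      ψ.quotKerEquivOfSurjective hψ
  exact ((Pi.basisFun ℤ ({a : ZMod p // a ≠ 0} × {b : ZMod p // b ≠ 0})).map e.symm).reindex
    (Fintype.equivFinOfCardEq (by rw [Fintype.card_prod, ZMod.card_subtype_ne_zero, sq]))

theorem stmt11 (p : ℕ) [NeZero p] (hp : p.Prime) (hodd : Odd p) :
    (∀ η : GA p, η * ((τ p (1, 0) - 1) * (τ p (0, 1) - 1)) = 0 ↔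
      η ∈ Ideal.span ({tr p (1, 0), tr p (0, 1)} : Set (GA p))) ∧
    Nonempty (Module.Basis (Fin ((p - 1) ^ 2)) ℤ
      (LinearMap.range (LinearMap.mulRight ℤ ((τ p (1, 0) - 1) * (τ p (0, 1) - 1))))) :=
  stmt11_general p
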